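/- Let a₂ : ℝ^{M₂} → ℝ^{M₂} be linear with ⟨a₂(θ), θ⟩ ≥ |θ|², b₂ bilinear with ⟨b₂(v, θ), θ⟩ = 0, and let ψ : [0,∞) → ℝ^{M₂} be differentiable with ψ(0) = 0 and ψ' + a₂(ψ) = −b₂(v, θ*) − b₂(ũ, ψ) for continuous v, θ*, ũ. Then for every η > 0 and t ≥ 0, |ψ(t)|² ≤ exp(C t + (η/2) ∫₀ᵗ |θ*(s)|² ds) · ∫₀ᵗ C |v(s)|² exp(−C s − (η/2)∫₀ˢ |θ*|²) ds in particular |ψ(t)|² ≤ exp(C t + (η/2) ∫₀ᵗ |θ*|² ds) C ∫₀ᵗ |v(s)|² ds, where C depends only on η and |b₂|. -/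

import Mathlib

/-!
Energy estimate and Grönwall. Testing the equation against `ψ` kills the transport term
`b₂ (ut t) ψ` and the coercive term `a₂ ψ` only helps, so
`d/dt ‖ψ‖² ≤ 2 ‖b₂‖ ‖v‖ ‖θs‖ ‖ψ‖ ≤ (2/η) ‖b₂‖² ‖v‖² + (η/2) ‖θs‖² ‖ψ‖²`.
Multiplying by the integrating factor `exp (-∫₀ˢ k)` with `k = (η/2) ‖θs‖²` turns this into
a bound on a derivative, which integrates from `ψ 0 = 0`.
-/

open scoped RealInnerProductSpace

open Real intervalIntegral

section Gronwall

variable {φ φ' g k : ℝ → ℝ}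

theorem le_exp_integral_mul_integral_of_hasDerivAt_le (hφ : ∀ s, HasDerivAt φ (φ' s) s)
    (hg : Continuous g) (hk : Continuous k) (hφ0 : φ 0 = 0)
    (hle : ∀ s ≥ 0, φ' s ≤ g s + k s * φ s) {t : ℝ} (ht : 0 ≤ t) :
    φ t ≤ exp (∫ s in 0..t, k s) * ∫ s in 0..t, g s * exp (-∫ r in 0..s, k r) := by
  set K : ℝ → ℝ := fun s => ∫ r in 0..s, k r
  have hK : ∀ s, HasDerivAt K (k s) s := fun s =>
    integral_hasDerivAt_right (hk.intervalIntegrable 0 s)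
      hk.aestronglyMeasurable.stronglyMeasurableAtFilter hk.continuousAt
  have hF : ∀ s, HasDerivAt (fun s => φ s * exp (-K s))
      ((φ' s - k s * φ s) * exp (-K s)) s := fun s =>
    ((hφ s).mul (hK s).neg.exp).congr_deriv (by simp only [Pi.neg_apply]; ring)
  have hKc : Continuous K := continuous_primitive (fun _ _ => hk.intervalIntegrable _ _) 0
  have hint : φ t * exp (-K t) - φ 0 * exp (-K 0) ≤ ∫ s in 0..t, g s * exp (-K s) :=
    sub_le_integral_of_hasDeriv_right_of_le ht
      (fun s _ => (hF s).continuousAt.continuousWithinAt) (fun s _ => (hF s).hasDerivWithinAt)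
      ((hg.mul hKc.neg.rexp).integrableOn_Icc)
      (fun s hs => mul_le_mul_of_nonneg_right (by linarith [hle s hs.1.le]) (exp_pos _).le)
  rw [hφ0, zero_mul, sub_zero] at hint
  calc φ t = exp (K t) * (φ t * exp (-K t)) := by
        rw [mul_left_comm, ← exp_add, add_neg_cancel, exp_zero, mul_one]
    _ ≤ exp (K t) * ∫ s in 0..t, g s * exp (-K s) :=
        mul_le_mul_of_nonneg_left hint (exp_pos _).le

theorem le_exp_integral_mul_integral_of_hasDerivAt_le_of_nonneg
    (hφ : ∀ s, HasDerivAt φ (φ' s) s) (hg : Continuous g) (hk : Continuous k) (hφ0 : φ 0 = 0)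
    (hg0 : ∀ s, 0 ≤ g s) (hk0 : ∀ s, 0 ≤ k s)
    (hle : ∀ s ≥ 0, φ' s ≤ g s + k s * φ s) {t : ℝ} (ht : 0 ≤ t) :
    φ t ≤ exp (∫ s in 0..t, k s) * ∫ s in 0..t, g s := by
  refine (le_exp_integral_mul_integral_of_hasDerivAt_le hφ hg hk hφ0 hle ht).trans ?_
  gcongr
  refine integral_mono_on ht ?_ (hg.intervalIntegrable 0 t) fun s hs => ?_
  · have hKc := continuous_primitive (μ := MeasureTheory.volume)
      (fun _ _ => hk.intervalIntegrable _ _) 0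
    exact (hg.mul hKc.neg.rexp).intervalIntegrable 0 t
  · exact mul_le_of_le_one_right (hg0 s)
      (exp_le_one_iff.2 (neg_nonpos.2 (integral_nonneg hs.1 fun r _ => hk0 r)))

end Gronwall

theorem two_mul_le_div_mul_sq_add_mul_sq {η : ℝ} (hη : 0 < η) (a b : ℝ) :
    2 * a * b ≤ 2 / η * a ^ 2 + η / 2 * b ^ 2 := by
  have : 0 ≤ (2 * a - η * b) ^ 2 / (2 * η) := by positivity
  have h : (2 * a - η * b) ^ 2 / (2 * η) = 2 / η * a ^ 2 + η / 2 * b ^ 2 - 2 * a * b := by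
    field_simp
    ring
  linarith

section Energy

variable {E1 E2 : Type*} [NormedAddCommGroup E1] [InnerProductSpace ℝ E1]
  [NormedAddCommGroup E2] [InnerProductSpace ℝ E2]

theorem two_mul_inner_le_of_add_eq_neg_sub (b₂ : E1 →L[ℝ] E2 →L[ℝ] E2) (a₂ : E2 →L[ℝ] E2)
    {η : ℝ} (hη : 0 < η) {x u : E1} {θ w p : E2} (ha : 0 ≤ ⟪a₂ w, w⟫) (hb : ⟪b₂ u w, w⟫ = 0)
    (h : p + a₂ w = -b₂ x θ - b₂ u w) :
    2 * ⟪p, w⟫ ≤ 2 / η * ‖b₂‖ ^ 2 * ‖x‖ ^ 2 + η / 2 * ‖θ‖ ^ 2 * ‖w‖ ^ 2 := by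
  have hp : p = -b₂ x θ - b₂ u w - a₂ w := eq_sub_of_add_eq h
  have hinner : ⟪p, w⟫ = -⟪b₂ x θ, w⟫ - ⟪a₂ w, w⟫ := by
    rw [hp, inner_sub_left, inner_sub_left, inner_neg_left, hb, sub_zero]
  have hcs : -⟪b₂ x θ, w⟫ ≤ ‖b₂‖ * ‖x‖ * (‖θ‖ * ‖w‖) :=
    calc -⟪b₂ x θ, w⟫ ≤ ‖b₂ x θ‖ * ‖w‖ := (neg_le_abs _).trans (abs_real_inner_le_norm _ _)
      _ ≤ ‖b₂‖ * ‖x‖ * ‖θ‖ * ‖w‖ := by gcongr; exact b₂.le_opNorm₂ x θ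
      _ = _ := by ring
  have := two_mul_le_div_mul_sq_add_mul_sq hη (‖b₂‖ * ‖x‖) (‖θ‖ * ‖w‖)
  rw [hinner]
  nlinarith

end Energy

theorem stmt_6 {E1 E2 : Type*}
    [NormedAddCommGroup E1] [InnerProductSpace ℝ E1]
    [NormedAddCommGroup E2] [InnerProductSpace ℝ E2]
    (b₂ : E1 →L[ℝ] E2 →L[ℝ] E2) (η : ℝ) (hη : 0 < η) :
    ∃ C > (0:ℝ), ∀ (a₂ : E2 →L[ℝ] E2), (∀ w : E2, ‖w‖ ^ 2 ≤ ⟪a₂ w, w⟫) →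
      ∀ (v : ℝ → E1) (θs : ℝ → E2) (ut : ℝ → E1) (ψ ψ' : ℝ → E2),
      Continuous v → Continuous θs → Continuous ut →
      (∀ t, HasDerivAt ψ (ψ' t) t) → ψ 0 = 0 →
      (∀ (x : E1) (w : E2), ⟪b₂ x w, w⟫ = 0) →
      (∀ t ≥ (0:ℝ), ψ' t + a₂ (ψ t) = -(b₂ (v t) (θs t)) - b₂ (ut t) (ψ t)) →
      ∀ t ≥ (0:ℝ), ‖ψ t‖ ^ 2 ≤
        Real.exp (C * t + (η / 2) * ∫ s in (0:ℝ)..t, ‖θs s‖ ^ 2) *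
          (C * ∫ s in (0:ℝ)..t, ‖v s‖ ^ 2) := by
  set C := 2 / η * ‖b₂‖ ^ 2 + 1
  refine ⟨C, by positivity, fun a₂ ha₂ v θs ut ψ ψ' hv hθ _ hψ hψ0 hb hode t ht => ?_⟩
  have hbound := le_exp_integral_mul_integral_of_hasDerivAt_le_of_nonneg
    (fun s => (hψ s).norm_sq) (g := fun s => C * ‖v s‖ ^ 2) (k := fun s => η / 2 * ‖θs s‖ ^ 2)
    (by fun_prop) (by fun_prop) (by simp [hψ0]) (fun s => by positivity) (fun s => by positivity)
    (fun s hs => ?energy) ht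
  case energy =>
    have := two_mul_inner_le_of_add_eq_neg_sub b₂ a₂ hη
      ((sq_nonneg _).trans (ha₂ (ψ s))) (hb _ _) (hode s hs)
    rw [real_inner_comm]
    nlinarith [sq_nonneg ‖v s‖]
  rw [integral_const_mul, integral_const_mul] at hbound
  refine hbound.trans (mul_le_mul_of_nonneg_right (exp_le_exp.2 ?_) ?_)
  · linarith [show 0 ≤ C * t by positivity]
  · exact mul_nonneg (by positivity) (integral_nonneg ht fun s _ => by positivity)
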